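/- arXiv:0810.0851 — 6 statements merged into one kernel-verified Lean document; each statement's English description precedes it below -/
import Mathlib

section
/- Let a, b be integers with a ≥ 1, b ≥ 1 and a*b ≥ 4, let c, d be the associated recursive sequences and g n = gcd(c n, d n). Then for every prime p there exists a smallest positive integer k such that p divides g k; moreover, for this k and for every integer n ≥ 1, p divides g n if and only if k divides n. -/
/-- The pair of recursive sequences `(c n, d n)` associated to a generalized
Cartan matrix of rank two with off-diagonal entries `-a`, `-b`:
`c 0 = d 0 = 0`, `c 1 = d 1 = 1`, `c (j+1) = a * d j - c (j-1)`,
`d (j+1) = b * c j - d (j-1)`. -/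
def KMcd (a b : ℤ) : ℕ → ℤ × ℤ
  | 0 => (0, 0)
  | 1 => (1, 1)
  | n + 2 => (a * (KMcd a b (n + 1)).2 - (KMcd a b n).1,
              b * (KMcd a b (n + 1)).1 - (KMcd a b n).2)

/-- The sequence `c`. -/
def KMc (a b : ℤ) (n : ℕ) : ℤ := (KMcd a b n).1

/-- The sequence `d`. -/
def KMd (a b : ℤ) (n : ℕ) : ℤ := (KMcd a b n).2

/-- `g n = gcd (c n) (d n)`. -/
def KMg (a b : ℤ) (n : ℕ) : ℕ := Int.gcd (KMc a b n) (KMd a b n)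

/-!
Read `c` and `d` modulo `p`. The recursion acts invertibly on the finite set of states
`(c n, d n, c (n + 1), d (n + 1))`, so the initial state, and with it `c k ≡ d k ≡ 0`, recurs at
some `k > 0`. For such a `k`, `n ↦ (c (k + n), d (k + n))` is a solution vanishing at `0`, hence
equals `(c, d)` rescaled by `d (k + 1)` and `c (k + 1)` alternately. Since `c = d` at odd indices,
`a d = b c` at even ones, and no state of `(c, d)` is zero, this gives `p ∣ g (k + n) ↔ p ∣ g n`.
So divisibility by `p` is periodic with period the least such `k`, and minimality of `k` turns
periodicity into `p ∣ g n ↔ k ∣ n`.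
-/

open Function

section Recursion

variable {R : Type*} [CommRing R] {a b : R} {x y x' y' : ℕ → R}

structure IsKMSolution (a b : R) (x y : ℕ → R) : Prop where
  x_add_two : ∀ n, x (n + 2) = a * y (n + 1) - x n
  y_add_two : ∀ n, y (n + 2) = b * x (n + 1) - y n

def kmState (x y : ℕ → R) (n : ℕ) : R × R × R × R := (x n, y n, x (n + 1), y (n + 1))

def kmStep (a b : R) (s : R × R × R × R) : R × R × R × R :=
  (s.2.2.1, s.2.2.2, a * s.2.2.2 - s.1, b * s.2.2.1 - s.2.1)

theorem kmStep_injective : Injective (kmStep a b) := by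
  rintro ⟨x, y, x', y'⟩ ⟨u, v, u', v'⟩ h
  simp only [kmStep, Prod.mk.injEq] at h
  obtain ⟨rfl, rfl, h₁, h₂⟩ := h
  simp_all

namespace IsKMSolution

theorem kmState_succ (h : IsKMSolution a b x y) (n : ℕ) :
    kmState x y (n + 1) = kmStep a b (kmState x y n) := by
  simp only [kmState, kmStep, h.x_add_two, h.y_add_two]

theorem kmState_eq_iterate (h : IsKMSolution a b x y) (n : ℕ) :
    kmState x y n = (kmStep a b)^[n] (kmState x y 0) := by
  induction n with
  | zero => rfl
  | succ n ih => rw [h.kmState_succ, ih, iterate_succ_apply']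

/-- As `kmStep` is injective, equality of states propagates backwards as well as forwards. -/
theorem kmState_eq_of_kmState_eq (h : IsKMSolution a b x y) (h' : IsKMSolution a b x' y')
    {k : ℕ} (hk : kmState x y k = kmState x' y' k) (n : ℕ) :
    kmState x y n = kmState x' y' n := by
  have h₀ : kmState x y 0 = kmState x' y' 0 :=
    kmStep_injective.iterate k (by rwa [← h.kmState_eq_iterate, ← h'.kmState_eq_iterate])
  rw [h.kmState_eq_iterate, h'.kmState_eq_iterate, h₀]

theorem shift (h : IsKMSolution a b x y) (k : ℕ) :
    IsKMSolution a b (fun n => x (k + n)) (fun n => y (k + n)) :=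
  ⟨fun n => h.x_add_two (k + n), fun n => h.y_add_two (k + n)⟩

theorem twist (h : IsKMSolution a b x y) {σ : ℕ → R} (hσ : Periodic σ 2) :
    IsKMSolution a b (fun n => σ n * x n) (fun n => σ (n + 1) * y n) where
  x_add_two n := by rw [h.x_add_two, hσ]; ring
  y_add_two n := by rw [h.y_add_two, show n + 2 + 1 = n + 1 + 2 by ring, hσ]; ring

end IsKMSolution

theorem eq_zero_of_add_two_eq_neg {f : ℕ → R} (hf : ∀ n, f (n + 2) = -f n) {k : ℕ}
    (h₀ : f k = 0) (h₁ : f (k + 1) = 0) : f 1 = 0 := by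
  induction k with
  | zero => exact h₁
  | succ k ih => exact ih (by rw [← neg_eq_zero, ← hf, h₁]) h₀

end Recursion

section KacMoody

variable (a b : ℤ)

@[simp] theorem KMc_zero : KMc a b 0 = 0 := rfl

@[simp] theorem KMd_zero : KMd a b 0 = 0 := rfl

@[simp] theorem KMc_one : KMc a b 1 = 1 := rfl

@[simp] theorem KMd_one : KMd a b 1 = 1 := rfl

theorem KMc_add_two (n : ℕ) : KMc a b (n + 2) = a * KMd a b (n + 1) - KMc a b n := rfl

theorem KMd_add_two (n : ℕ) : KMd a b (n + 2) = b * KMc a b (n + 1) - KMd a b n := rfl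

theorem KMc_odd_eq_KMd_odd_and_mul_KMd_even (m : ℕ) :
    KMc a b (2 * m + 1) = KMd a b (2 * m + 1) ∧ a * KMd a b (2 * m) = b * KMc a b (2 * m) := by
  induction m with
  | zero => exact ⟨rfl, by simp⟩
  | succ m ih =>
    have heven : a * KMd a b (2 * m + 2) = b * KMc a b (2 * m + 2) := by
      rw [KMc_add_two, KMd_add_two]; linear_combination a * b * ih.1 - ih.2
    refine ⟨?_, heven⟩
    rw [show 2 * (m + 1) + 1 = 2 * m + 1 + 2 by ring, KMc_add_two, KMd_add_two a b (2 * m + 1)]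
    linear_combination heven - ih.1

variable {R : Type*} [CommRing R]

theorem isKMSolution_KMc_KMd :
    IsKMSolution (a : R) b (fun n => (KMc a b n : R)) (fun n => (KMd a b n : R)) where
  x_add_two n := by simp [KMc_add_two]
  y_add_two n := by simp [KMd_add_two]

variable {a b}

theorem kmState_KMc_KMd_ne_zero [Nontrivial R] (k : ℕ) :
    kmState (fun n => (KMc a b n : R)) (fun n => (KMd a b n : R)) k ≠ 0 := by
  intro hk
  have hzero : IsKMSolution (a : R) b 0 0 := ⟨fun _ => by simp, fun _ => by simp⟩
  have h₁ := congrArg (·.1) ((isKMSolution_KMc_KMd a b).kmState_eq_of_kmState_eq hzero hk 1)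
  simp [kmState] at h₁

theorem not_KMc_eq_zero_and_succ_eq_zero [Nontrivial R] (ha : (a : R) = 0) (k : ℕ) :
    ¬ ((KMc a b k : R) = 0 ∧ (KMc a b (k + 1) : R) = 0) := by
  rintro ⟨h₀, h₁⟩
  have := eq_zero_of_add_two_eq_neg (f := fun n => (KMc a b n : R))
    (fun n => by simp [KMc_add_two, ha]) h₀ h₁
  simp at this

theorem not_KMd_eq_zero_and_succ_eq_zero [Nontrivial R] (hb : (b : R) = 0) (k : ℕ) :
    ¬ ((KMd a b k : R) = 0 ∧ (KMd a b (k + 1) : R) = 0) := by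
  rintro ⟨h₀, h₁⟩
  have := eq_zero_of_add_two_eq_neg (f := fun n => (KMd a b n : R))
    (fun n => by simp [KMd_add_two, hb]) h₀ h₁
  simp at this

/-- The shifted solution vanishes at `0`, so it agrees with the twist of `(c, d)` that has the
same state at `0`. -/
theorem KMc_KMd_add_of_eq_zero {k : ℕ} (hc : (KMc a b k : R) = 0) (hd : (KMd a b k : R) = 0)
    (m : ℕ) :
    ((KMc a b (k + 2 * m) : R) = KMd a b (k + 1) * KMc a b (2 * m) ∧
      (KMd a b (k + 2 * m) : R) = KMc a b (k + 1) * KMd a b (2 * m)) ∧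
    ((KMc a b (k + (2 * m + 1)) : R) = KMc a b (k + 1) * KMc a b (2 * m + 1) ∧
      (KMd a b (k + (2 * m + 1)) : R) = KMd a b (k + 1) * KMd a b (2 * m + 1)) := by
  set σ : ℕ → R := fun n => if Even n then (KMd a b (k + 1) : R) else KMc a b (k + 1)
  have hσ : Periodic σ 2 := fun n => by simp [σ, Nat.even_add]
  have h := isKMSolution_KMc_KMd (R := R) a b
  have hstate := (h.shift k).kmState_eq_of_kmState_eq (h.twist hσ) (k := 0)
    (by simp [kmState, σ, hc, hd])
  have heven := hstate (2 * m)
  have hodd := hstate (2 * m + 1)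
  simp only [kmState, Prod.mk.injEq, σ] at heven hodd
  simp_all [Nat.even_add_one]

theorem KMc_KMd_add_eq_zero_iff [IsDomain R] {k : ℕ} (hc : (KMc a b k : R) = 0)
    (hd : (KMd a b k : R) = 0) (n : ℕ) :
    (KMc a b (k + n) : R) = 0 ∧ (KMd a b (k + n) : R) = 0 ↔
      (KMc a b n : R) = 0 ∧ (KMd a b n : R) = 0 := by
  have hstate : ¬ ((KMc a b (k + 1) : R) = 0 ∧ (KMd a b (k + 1) : R) = 0) := fun h =>
    kmState_KMc_KMd_ne_zero (R := R) (a := a) (b := b) k (by simp [kmState, hc, hd, h.1, h.2])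
  obtain ⟨m, rfl | rfl⟩ := Nat.even_or_odd' n
  · obtain ⟨⟨hc', hd'⟩, -⟩ := KMc_KMd_add_of_eq_zero hc hd m
    have hparity : (a : R) * KMd a b (2 * m) = b * KMc a b (2 * m) := by
      exact_mod_cast congrArg (Int.cast : ℤ → R) (KMc_odd_eq_KMd_odd_and_mul_KMd_even a b m).2
    rw [hc', hd', mul_eq_zero, mul_eq_zero]
    constructor
    · rintro ⟨hd₁ | hcm, hc₁ | hdm⟩
      · exact absurd ⟨hc₁, hd₁⟩ hstate
      · refine ⟨by_contra fun hcm => ?_, hdm⟩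
        have hb : (b : R) = 0 := by simpa [hdm, hcm] using hparity.symm
        exact not_KMd_eq_zero_and_succ_eq_zero hb k ⟨hd, hd₁⟩
      · refine ⟨hcm, by_contra fun hdm => ?_⟩
        have ha : (a : R) = 0 := by simpa [hdm, hcm] using hparity
        exact not_KMc_eq_zero_and_succ_eq_zero ha k ⟨hc, hc₁⟩
      · exact ⟨hcm, hdm⟩
    · rintro ⟨hcm, hdm⟩
      exact ⟨Or.inr hcm, Or.inr hdm⟩
  · obtain ⟨-, hc', hd'⟩ := KMc_KMd_add_of_eq_zero hc hd m
    have hparity : (KMd a b (2 * m + 1) : R) = KMc a b (2 * m + 1) := by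
      exact_mod_cast congrArg (Int.cast : ℤ → R) (KMc_odd_eq_KMd_odd_and_mul_KMd_even a b m).1.symm
    rw [hc', hd', hparity, mul_eq_zero, mul_eq_zero, ← and_or_right, and_self]
    exact or_iff_right hstate

theorem exists_pos_KMc_KMd_eq_zero [Finite R] :
    ∃ k, 0 < k ∧ (KMc a b k : R) = 0 ∧ (KMd a b k : R) = 0 := by
  have h := isKMSolution_KMc_KMd (R := R) a b
  obtain ⟨i, j, hne, hij⟩ := Finite.exists_ne_map_eq_of_infinite
    (kmState (fun n => (KMc a b n : R)) (fun n => (KMd a b n : R)))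
  wlog hlt : i < j generalizing i j
  · exact this j i hne.symm hij.symm (by omega)
  obtain ⟨t, rfl⟩ := Nat.exists_eq_add_of_lt hlt
  -- the solution shifted by `t + 1` has the same state at `i`, hence also at `0`
  have h₀ := congrArg (fun s => (s.1, s.2.1))
    (h.kmState_eq_of_kmState_eq (h.shift (t + 1)) (k := i)
      (by rw [hij]; simp only [kmState]; ring_nf) 0)
  simp only [kmState, KMc_zero, KMd_zero, Int.cast_zero, add_zero, Prod.mk.injEq] at h₀
  exact ⟨t + 1, t.succ_pos, h₀.1.symm, h₀.2.symm⟩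

end KacMoody

theorem Function.Periodic.iff_dvd {P : ℕ → Prop} {k : ℕ} (hP : Periodic P k) (hk : 0 < k)
    (h₀ : P 0) (hmin : ∀ m, 0 < m → m < k → ¬ P m) (n : ℕ) : P n ↔ k ∣ n := by
  rw [← hP.map_mod_nat, Nat.dvd_iff_mod_eq_zero]
  refine ⟨fun h => by_contra fun hne => hmin _ (Nat.pos_of_ne_zero hne) (Nat.mod_lt n hk) h,
    fun h => h ▸ h₀⟩

theorem dvd_KMg_iff (a b : ℤ) (p n : ℕ) :
    p ∣ KMg a b n ↔ (KMc a b n : ZMod p) = 0 ∧ (KMd a b n : ZMod p) = 0 := by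
  simp only [KMg, Int.dvd_gcd_iff, ZMod.intCast_zmod_eq_zero_iff_dvd]

theorem smallest_k_exists_and_divisibility_general
    (a b : ℤ) (p : ℕ) (hp : p.Prime) :
    ∃ k : ℕ, 0 < k ∧ p ∣ KMg a b k ∧
      (∀ m : ℕ, 0 < m → m < k → ¬ p ∣ KMg a b m) ∧
      (∀ n : ℕ, 1 ≤ n → (p ∣ KMg a b n ↔ k ∣ n)) := by
  have : Fact p.Prime := ⟨hp⟩
  have hex : ∃ k, 0 < k ∧ p ∣ KMg a b k := by
    simpa only [dvd_KMg_iff] using exists_pos_KMc_KMd_eq_zero (R := ZMod p) (a := a) (b := b)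
  obtain ⟨k, ⟨hk₀, hk⟩, hmin⟩ :
      ∃ k, (0 < k ∧ p ∣ KMg a b k) ∧ ∀ m < k, ¬ (0 < m ∧ p ∣ KMg a b m) :=
    ⟨Nat.find hex, Nat.find_spec hex, fun _ => Nat.find_min hex⟩
  have hmin' : ∀ m, 0 < m → m < k → ¬ p ∣ KMg a b m := fun m hm hlt h => hmin m hlt ⟨hm, h⟩
  have hper : Periodic (fun n => p ∣ KMg a b n) k := fun n => by
    rw [dvd_KMg_iff] at hk
    simp only [dvd_KMg_iff, add_comm n]
    exact propext (KMc_KMd_add_eq_zero_iff hk.1 hk.2 n)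
  exact ⟨k, hk₀, hk, hmin', fun n _ => hper.iff_dvd hk₀ (by simp [dvd_KMg_iff]) hmin' n⟩

theorem smallest_k_exists_and_divisibility
    (a b : ℤ) (ha : 1 ≤ a) (hb : 1 ≤ b) (hab : 4 ≤ a * b)
    (p : ℕ) (hp : p.Prime) :
    ∃ k : ℕ, 0 < k ∧ p ∣ KMg a b k ∧
      (∀ m : ℕ, 0 < m → m < k → ¬ p ∣ KMg a b m) ∧
      (∀ n : ℕ, 1 ≤ n → (p ∣ KMg a b n ↔ k ∣ n)) :=
  smallest_k_exists_and_divisibility_general a b p hp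
end

section
/- Let a, b be integers with a ≥ 1, b ≥ 1 and a*b ≥ 4, let c, d be the associated recursive sequences and g n = gcd(c n, d n). Let p be a prime such that a*b ≢ 4 (mod p) and such that it is NOT the case that p divides exactly one of a and b. Then the polynomial X² − (a*b − 2)·X + 1 has a root in the field GaloisField p 2 with p² elements; moreover every such root α is nonzero, and the multiplicative order of α is the smallest positive integer k such that p divides g k (in particular this order is the same for both roots). -/
/-!
Put `t = a b - 2`. Both `c n` and `d n` are expressed through the Lucas sequence `U_k(t, 1)`:
`(c (2k), d (2k)) = (a U_k, b U_k)` and `c (2k+1) = d (2k+1) = U_{k+1} + U_k`. For a root `α` of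
`X² - t X + 1` with conjugate `β = α⁻¹ = t - α`, one has `α^k - β^k = U_k (α - β)` and
`α^(k+1) - β^k = (U_{k+1} + U_k) (α - 1)`, so that `α^(2k) = 1` and `α^(2k+1) = 1` become
vanishing conditions on `U_k (α - β)` and `(U_{k+1} + U_k) (α - 1)`. Modulo `p`, `α ≠ 1` because
`a b ≢ 4`, and `α = β` iff the discriminant `a b (a b - 4)` vanishes, i.e. iff `p` divides `a`
and `b`. Hence `p ∣ g n ↔ α^n = 1` for every `n`, and the smallest such `n > 0` is `orderOf α`.
-/

open Polynomial

/-- The Lucas sequence `U_n(t, 1)`. -/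
def lucasU (t : ℤ) : ℕ → ℤ
  | 0 => 0
  | 1 => 1
  | n + 2 => t * lucasU t (n + 1) - lucasU t n

theorem KMcd_eq_lucasU (a b : ℤ) (k : ℕ) :
    KMcd a b (2 * k) = (a * lucasU (a * b - 2) k, b * lucasU (a * b - 2) k) ∧
    KMcd a b (2 * k + 1) =
      (lucasU (a * b - 2) (k + 1) + lucasU (a * b - 2) k,
        lucasU (a * b - 2) (k + 1) + lucasU (a * b - 2) k) := by
  induction k with
  | zero => simp [KMcd, lucasU]
  | succ k ih =>
    have heven : KMcd a b (2 * (k + 1)) =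
        (a * lucasU (a * b - 2) (k + 1), b * lucasU (a * b - 2) (k + 1)) := by
      rw [show 2 * (k + 1) = 2 * k + 2 by ring, KMcd, ih.1, ih.2, Prod.mk.injEq]
      constructor <;> ring
    refine ⟨heven, ?_⟩
    rw [show 2 * (k + 1) + 1 = 2 * k + 1 + 2 by ring, KMcd, show 2 * k + 1 + 1 = 2 * (k + 1) by ring,
      heven, ih.2, lucasU, Prod.mk.injEq]
    constructor <;> ring

theorem KMg_two_mul (a b : ℤ) (k : ℕ) :
    KMg a b (2 * k) = Int.gcd a b * (lucasU (a * b - 2) k).natAbs := by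
  rw [KMg, KMc, KMd, (KMcd_eq_lucasU a b k).1]
  exact Int.gcd_mul_right a _ b

theorem KMg_two_mul_add_one (a b : ℤ) (k : ℕ) :
    KMg a b (2 * k + 1) = (lucasU (a * b - 2) (k + 1) + lucasU (a * b - 2) k).natAbs := by
  rw [KMg, KMc, KMd, (KMcd_eq_lucasU a b k).2]
  exact Int.gcd_self

theorem pow_add_eq_one_iff {M : Type*} [CommMonoid M] {γ β : M} (h : γ * β = 1) (m k : ℕ) :
    γ ^ (m + k) = 1 ↔ γ ^ m = β ^ k := by
  constructor
  · intro h'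
    calc γ ^ m = γ ^ m * (γ * β) ^ k := by rw [h, one_pow, mul_one]
      _ = γ ^ (m + k) * β ^ k := by rw [mul_pow, pow_add, mul_assoc]
      _ = β ^ k := by rw [h', one_mul]
  · intro h'
    rw [pow_add, h', ← mul_pow, mul_comm β, h, one_pow]

section LucasRoots

variable {R : Type*} [CommRing R] {t : ℤ} {γ β : R}

theorem pow_eq_lucasU (hmul : γ * β = 1) (hadd : γ + β = t) (k : ℕ) :
    γ ^ k = lucasU t (k + 1) - lucasU t k * β := by
  induction k with
  | zero => simp [lucasU]
  | succ k ih =>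
    rw [pow_succ, ih, lucasU]
    push_cast
    linear_combination (lucasU t (k + 1) : R) * hadd - (lucasU t k : R) * hmul

theorem pow_sub_pow_eq_lucasU_mul (hmul : γ * β = 1) (hadd : γ + β = t) (k : ℕ) :
    γ ^ k - β ^ k = lucasU t k * (γ - β) := by
  rw [pow_eq_lucasU hmul hadd, pow_eq_lucasU ((mul_comm β γ).trans hmul) ((add_comm β γ).trans hadd)]
  ring

theorem pow_succ_sub_pow_eq_lucasU_mul (hmul : γ * β = 1) (hadd : γ + β = t) (k : ℕ) :
    γ ^ (k + 1) - β ^ k = ((lucasU t (k + 1) + lucasU t k : ℤ) : R) * (γ - 1) := by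
  rw [pow_eq_lucasU hmul hadd, pow_eq_lucasU ((mul_comm β γ).trans hmul) ((add_comm β γ).trans hadd),
    lucasU]
  push_cast
  linear_combination -(lucasU t (k + 1) : R) * hadd

variable [IsDomain R]

theorem pow_two_mul_eq_one_iff (hmul : γ * β = 1) (hadd : γ + β = t) (k : ℕ) :
    γ ^ (2 * k) = 1 ↔ (lucasU t k : R) = 0 ∨ γ = β := by
  rw [two_mul, pow_add_eq_one_iff hmul, ← sub_eq_zero, pow_sub_pow_eq_lucasU_mul hmul hadd,
    mul_eq_zero, sub_eq_zero]

theorem pow_two_mul_add_one_eq_one_iff (hmul : γ * β = 1) (hadd : γ + β = t) (hγ : γ ≠ 1)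
    (k : ℕ) : γ ^ (2 * k + 1) = 1 ↔ ((lucasU t (k + 1) + lucasU t k : ℤ) : R) = 0 := by
  rw [show 2 * k + 1 = (k + 1) + k by ring, pow_add_eq_one_iff hmul, ← sub_eq_zero,
    pow_succ_sub_pow_eq_lucasU_mul hmul hadd, mul_eq_zero, sub_eq_zero, or_iff_left hγ]

end LucasRoots

theorem dvd_KMg_iff_pow_eq_one {a b : ℤ} {p : ℕ} [Fact p.Prime] {F : Type*} [Field F] [CharP F p]
    (hmod : ¬ a * b ≡ 4 [ZMOD (p : ℤ)])
    (hnotone : ¬ (((p : ℤ) ∣ a ∧ ¬ (p : ℤ) ∣ b) ∨ (¬ (p : ℤ) ∣ a ∧ (p : ℤ) ∣ b)))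
    {α : F} (hα : α ^ 2 - ((a * b - 2 : ℤ) : F) * α + 1 = 0) (n : ℕ) :
    p ∣ KMg a b n ↔ α ^ n = 1 := by
  set β := ((a * b - 2 : ℤ) : F) - α
  have hmul : α * β = 1 := by linear_combination -hα
  have hadd : α + β = ((a * b - 2 : ℤ) : F) := add_sub_cancel α _
  have hcast (x : ℤ) : (x : F) = 0 ↔ (p : ℤ) ∣ x := CharP.intCast_eq_zero_iff F p x
  have h4 : ((a * b - 4 : ℤ) : F) ≠ 0 := fun h ↦ hmod (Int.modEq_iff_dvd.2 ((hcast _).1 h)).symm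
  have hα1 : α ≠ 1 := by
    rintro rfl
    apply h4
    push_cast at hα ⊢
    linear_combination -hα
  have hdisc : α = β ↔ (p : ℤ) ∣ a ∧ (p : ℤ) ∣ b := by
    have hsq : (α - β) ^ 2 = ((a * b * (a * b - 4) : ℤ) : F) := by
      push_cast at hadd ⊢
      linear_combination (α + β + a * b - 2) * hadd - 4 * hmul
    rw [← sub_eq_zero, ← pow_eq_zero_iff two_ne_zero, hsq, Int.cast_mul, mul_eq_zero,
      or_iff_left h4, Int.cast_mul, mul_eq_zero, hcast, hcast]
    tauto
  obtain ⟨k, rfl | rfl⟩ := Nat.even_or_odd' n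
  · rw [KMg_two_mul, (Fact.out : p.Prime).dvd_mul, pow_two_mul_eq_one_iff hmul hadd, hdisc,
      hcast, Int.natCast_dvd, Int.gcd_eq_natAbs, Nat.dvd_gcd_iff, ← Int.natCast_dvd,
      ← Int.natCast_dvd, or_comm]
  · rw [KMg_two_mul_add_one, pow_two_mul_add_one_eq_one_iff hmul hadd hα1, hcast, Int.natCast_dvd]

theorem exists_aeval_eq_zero_of_natDegree_le_two {K L : Type*} [Field K] [Field L] [Algebra K L]
    [Finite L] (hL : Module.finrank K L = 2) {f : K[X]} (hpos : 0 < f.natDegree)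
    (hle : f.natDegree ≤ 2) : ∃ α : L, aeval α f = 0 := by
  have hf0 : f ≠ 0 := ne_zero_of_natDegree_gt hpos
  obtain ⟨g, hg, hgf⟩ := WfDvdMonoid.exists_irreducible_factor
    (not_isUnit_of_natDegree_pos f hpos) hf0
  have : Fact (Irreducible g) := ⟨hg⟩
  have hdeg : g.natDegree ∣ 2 :=
    (Nat.dvd_prime Nat.prime_two).2 (by
      have := hg.natDegree_pos
      have := natDegree_le_of_dvd hgf hf0
      omega)
  obtain ⟨φ⟩ := FiniteField.nonempty_algHom_of_finrank_dvd (F := K) (K := AdjoinRoot g) (L := L)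
    (by rwa [hL, (AdjoinRoot.powerBasis hg.ne_zero).finrank, AdjoinRoot.powerBasis_dim])
  refine ⟨φ (AdjoinRoot.root g), ?_⟩
  rw [aeval_algHom_apply, AdjoinRoot.aeval_eq, AdjoinRoot.mk_eq_zero.2 hgf, map_zero]

theorem smallest_k_eq_order_of_root_general
    (a b : ℤ)
    (p : ℕ) [Fact p.Prime]
    (hmod : ¬ a * b ≡ 4 [ZMOD (p : ℤ)])
    (hnotone : ¬ (((p : ℤ) ∣ a ∧ ¬ (p : ℤ) ∣ b) ∨ (¬ (p : ℤ) ∣ a ∧ (p : ℤ) ∣ b))) :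
    (∃ α : GaloisField p 2, α ^ 2 - ((a * b - 2 : ℤ) : GaloisField p 2) * α + 1 = 0) ∧
    ∀ α : GaloisField p 2, α ^ 2 - ((a * b - 2 : ℤ) : GaloisField p 2) * α + 1 = 0 →
      α ≠ 0 ∧ 0 < orderOf α ∧ p ∣ KMg a b (orderOf α) ∧
        ∀ m : ℕ, 0 < m → m < orderOf α → ¬ p ∣ KMg a b m := by
  constructor
  · have hdeg : (X ^ 2 - ((a * b - 2 : ℤ) : (ZMod p)[X]) * X + 1).natDegree = 2 := by
      compute_degree!
    obtain ⟨α, hα⟩ := exists_aeval_eq_zero_of_natDegree_le_two (GaloisField.finrank p two_ne_zero)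
      (by omega) hdeg.le
    exact ⟨α, by simpa only [map_add, map_sub, map_mul, map_pow, aeval_X, map_intCast, map_one]
      using hα⟩
  · intro α hα
    have hα0 : α ≠ 0 := by rintro rfl; simp at hα
    have hdvd := dvd_KMg_iff_pow_eq_one hmod hnotone hα
    refine ⟨hα0, hα0.isUnit.isOfFinOrder.orderOf_pos, (hdvd _).2 (pow_orderOf_eq_one α), ?_⟩
    exact fun m hm hlt h ↦ pow_ne_one_of_lt_orderOf hm.ne' hlt ((hdvd m).1 h)

theorem smallest_k_eq_order_of_root
    (a b : ℤ) (ha : 1 ≤ a) (hb : 1 ≤ b) (hab : 4 ≤ a * b)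
    (p : ℕ) [Fact p.Prime]
    (hmod : ¬ a * b ≡ 4 [ZMOD (p : ℤ)])
    (hnotone : ¬ (((p : ℤ) ∣ a ∧ ¬ (p : ℤ) ∣ b) ∨ (¬ (p : ℤ) ∣ a ∧ (p : ℤ) ∣ b))) :
    (∃ α : GaloisField p 2, α ^ 2 - ((a * b - 2 : ℤ) : GaloisField p 2) * α + 1 = 0) ∧
    ∀ α : GaloisField p 2, α ^ 2 - ((a * b - 2 : ℤ) : GaloisField p 2) * α + 1 = 0 →
      α ≠ 0 ∧ 0 < orderOf α ∧ p ∣ KMg a b (orderOf α) ∧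
        ∀ m : ℕ, 0 < m → m < orderOf α → ¬ p ∣ KMg a b m :=
  smallest_k_eq_order_of_root_general a b p hmod hnotone
end

section
/- Let a, b be integers with a ≥ 1, b ≥ 1 and a*b ≥ 4, and let d be the associated recursive sequence. Then for all natural numbers n and m, the product (∏_{i=1}^{n} d i) * (∏_{i=1}^{m} d i) divides ∏_{i=1}^{n+m} d i in ℤ; equivalently, the generalized binomial coefficient D(n,m) = (d_{n+m} · d_{n+m−1} ⋯ d_1) / ((d_n ⋯ d_1)(d_m ⋯ d_1)) is an integer. -/
open Finset

theorem prod_Icc_mul_prod_Icc_dvd_prod_Icc_add {R : Type*} [CommSemiring R] (f : ℕ → R)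
    (hf : ∀ n m : ℕ, ∃ A B : R, f (n + 1 + (m + 1)) = A * f (n + 1) + B * f (m + 1))
    (n m : ℕ) :
    (∏ i ∈ Icc 1 n, f i) * (∏ i ∈ Icc 1 m, f i) ∣ ∏ i ∈ Icc 1 (n + m), f i := by
  have prod_succ (k : ℕ) : ∏ i ∈ Icc 1 (k + 1), f i = f (k + 1) * ∏ i ∈ Icc 1 k, f i := by
    rw [prod_Icc_succ_top (by omega), mul_comm]
  induction n generalizing m with
  | zero => simp
  | succ n ihn =>
    induction m with
    | zero => simp
    | succ m ihm =>
      obtain ⟨A, B, hAB⟩ := hf n m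
      have h₁ := mul_dvd_mul_left (f (n + 1)) (ihn (m + 1))
      have h₂ := mul_dvd_mul_left (f (m + 1)) ihm
      rw [← mul_assoc, ← prod_succ, ← add_assoc] at h₁
      rw [mul_left_comm, ← prod_succ, add_right_comm] at h₂
      rw [← add_assoc, prod_succ (n + 1 + m), add_assoc, hAB, add_right_comm n 1 m, add_mul,
        mul_assoc, mul_assoc]
      exact dvd_add (h₁.mul_left A) (h₂.mul_left B)

def swapRingAut (R : Type*) [Semiring R] : RingAut (R × R) := RingEquiv.prodComm

section swapRingAut

variable {R : Type*} [Semiring R]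

@[simp]
theorem swapRingAut_apply (x : R × R) : swapRingAut R x = x.swap := rfl

@[simp]
theorem swapRingAut_swapRingAut (x : R × R) : swapRingAut R (swapRingAut R x) = x := x.swap_swap

theorem swapRingAut_sq : swapRingAut R ^ 2 = 1 := by
  ext x <;> rfl

theorem swapRingAut_pow_of_even {n : ℕ} (hn : Even n) : swapRingAut R ^ n = 1 := by
  obtain ⟨k, rfl⟩ := hn
  rw [← two_mul, pow_mul, swapRingAut_sq, one_pow]

theorem swapRingAut_pow_of_odd {n : ℕ} (hn : Odd n) : swapRingAut R ^ n = swapRingAut R := by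
  obtain ⟨k, rfl⟩ := hn
  rw [pow_succ, swapRingAut_pow_of_even (even_two_mul k), one_mul]

theorem swapRingAut_pow_add_two (n : ℕ) : swapRingAut R ^ (n + 2) = swapRingAut R ^ n := by
  rw [pow_add, swapRingAut_sq, mul_one]

end swapRingAut

section KMcd

variable (a b : ℤ)

theorem KMcd_zero : KMcd a b 0 = 0 := rfl
theorem KMcd_one : KMcd a b 1 = 1 := rfl

theorem KMcd_add_two (n : ℕ) :
    KMcd a b (n + 2) = (a, b) * swapRingAut ℤ (KMcd a b (n + 1)) - KMcd a b n := rfl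

theorem KMcd_parity (k : ℕ) :
    (∃ e : ℤ, KMcd a b (2 * k) = e * (a, b)) ∧ ∃ e : ℤ, KMcd a b (2 * k + 1) = e := by
  induction k with
  | zero => exact ⟨⟨0, by simp [KMcd_zero]⟩, ⟨1, by simp [KMcd_one]⟩⟩
  | succ k ih =>
    obtain ⟨⟨e₀, h₀⟩, ⟨e₁, h₁⟩⟩ := ih
    have h₂ : KMcd a b (2 * k + 2) = ((e₁ - e₀ : ℤ) : ℤ × ℤ) * (a, b) := by
      rw [KMcd_add_two, h₀, h₁]
      ext <;> simp only [Prod.fst_mul, Prod.snd_mul, Prod.fst_sub, Prod.snd_sub, Prod.fst_intCast,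
        Prod.snd_intCast, swapRingAut_apply, Prod.fst_swap, Prod.snd_swap, Int.cast_id] <;> ring
    refine ⟨⟨e₁ - e₀, h₂⟩, ⟨a * b * (e₁ - e₀) - e₁, ?_⟩⟩
    rw [show 2 * (k + 1) + 1 = 2 * k + 1 + 2 by ring, KMcd_add_two, h₂, h₁]
    ext <;> simp only [Prod.fst_mul, Prod.snd_mul, Prod.fst_sub, Prod.snd_sub, Prod.fst_intCast,
      Prod.snd_intCast, swapRingAut_apply, Prod.fst_swap, Prod.snd_swap, Int.cast_id] <;> ring

theorem swapRingAut_pow_apply_KMcd (n : ℕ) :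
    (swapRingAut ℤ ^ n) (KMcd a b n) = KMcd a b n := by
  obtain ⟨k, rfl | rfl⟩ := Nat.even_or_odd' n
  · rw [swapRingAut_pow_of_even (even_two_mul k), RingAut.one_apply]
  · obtain ⟨e, he⟩ := (KMcd_parity a b k).2
    rw [swapRingAut_pow_of_odd (odd_two_mul_add_one k), he, map_intCast]

theorem swapRingAut_pow_apply_KMcd_mul_comm (n j : ℕ) :
    (swapRingAut ℤ ^ (n + j + 1)) (KMcd a b n) * KMcd a b j =
      (swapRingAut ℤ ^ (n + j + 1)) (KMcd a b j) * KMcd a b n := by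
  obtain ⟨k, rfl | rfl⟩ := Nat.even_or_odd' n <;>
    obtain ⟨l, rfl | rfl⟩ := Nat.even_or_odd' j
  · obtain ⟨e, he⟩ := (KMcd_parity a b k).1
    obtain ⟨e', he'⟩ := (KMcd_parity a b l).1
    rw [swapRingAut_pow_of_odd ⟨k + l, by ring⟩]
    simp only [he, he', map_mul, map_intCast, swapRingAut_apply, Prod.swap_prod_mk]
    ring
  · rw [swapRingAut_pow_of_even ⟨k + l + 1, by ring⟩, RingAut.one_apply, RingAut.one_apply,
      mul_comm]
  · rw [swapRingAut_pow_of_even ⟨k + l + 1, by ring⟩, RingAut.one_apply, RingAut.one_apply,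
      mul_comm]
  · obtain ⟨e, he⟩ := (KMcd_parity a b k).2
    obtain ⟨e', he'⟩ := (KMcd_parity a b l).2
    rw [he, he', map_intCast, map_intCast, mul_comm]

theorem swapRingAut_pow_apply_KMcd_succ (n : ℕ) :
    (swapRingAut ℤ ^ n) (KMcd a b (n + 1)) = swapRingAut ℤ (KMcd a b (n + 1)) := by
  rw [← swapRingAut_pow_add_two, pow_succ', RingAut.mul_apply, swapRingAut_pow_apply_KMcd]

theorem KMcd_add (n j : ℕ) :
    KMcd a b (n + j + 1) = (swapRingAut ℤ ^ (n + j + 1)) (KMcd a b (n + 1)) * KMcd a b (j + 1) -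
      (swapRingAut ℤ ^ (n + j + 1)) (KMcd a b n) * KMcd a b j := by
  induction j using Nat.twoStepInduction with
  | zero =>
    rw [add_zero, swapRingAut_pow_apply_KMcd, KMcd_zero, KMcd_one, mul_one, mul_zero, sub_zero]
  | one =>
    rw [swapRingAut_pow_add_two, swapRingAut_pow_apply_KMcd, swapRingAut_pow_apply_KMcd_succ,
      KMcd_add_two, KMcd_add_two, KMcd_one, KMcd_zero, map_one]
    ring
  | more j ih₀ ih₁ =>
    set τ := swapRingAut ℤ ^ (n + j + 1)
    have hσ : swapRingAut ℤ ^ (n + (j + 1) + 1) = swapRingAut ℤ * τ := pow_succ' _ _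
    have hτ : swapRingAut ℤ ^ (n + (j + 2) + 1) = τ := swapRingAut_pow_add_two _
    have hswap := congrArg (swapRingAut ℤ) ih₁
    rw [hσ, map_sub, map_mul, map_mul, RingAut.mul_apply, RingAut.mul_apply,
      swapRingAut_swapRingAut, swapRingAut_swapRingAut] at hswap
    rw [hτ]
    linear_combination KMcd_add_two a b (n + j + 1) + (a, b) * hswap - ih₀
      - τ (KMcd a b (n + 1)) * KMcd_add_two a b (j + 1) + τ (KMcd a b n) * KMcd_add_two a b j

theorem exists_KMcd_add_eq (n j : ℕ) :
    ∃ A B : ℤ × ℤ,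
      KMcd a b (n + 1 + (j + 1)) = A * KMcd a b (n + 1) + B * KMcd a b (j + 1) := by
  set τ := swapRingAut ℤ ^ (n + 1 + j + 1)
  refine ⟨-τ (KMcd a b j), τ (KMcd a b (n + 2)), ?_⟩
  linear_combination KMcd_add a b (n + 1) j - swapRingAut_pow_apply_KMcd_mul_comm a b (n + 1) j

end KMcd

theorem generalized_binomial_D_integral_general (a b : ℤ) :
    ∀ n m : ℕ,
      (∏ i ∈ Finset.Icc 1 n, KMd a b i) * (∏ i ∈ Finset.Icc 1 m, KMd a b i) ∣
        ∏ i ∈ Finset.Icc 1 (n + m), KMd a b i := fun n m => by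
  have := map_dvd (RingHom.snd ℤ ℤ)
    (prod_Icc_mul_prod_Icc_dvd_prod_Icc_add (KMcd a b) (exists_KMcd_add_eq a b) n m)
  rwa [map_mul, map_prod, map_prod, map_prod] at this

theorem generalized_binomial_D_integral
    (a b : ℤ) (ha : 1 ≤ a) (hb : 1 ≤ b) (hab : 4 ≤ a * b) :
    ∀ n m : ℕ,
      (∏ i ∈ Finset.Icc 1 n, KMd a b i) * (∏ i ∈ Finset.Icc 1 m, KMd a b i) ∣
        ∏ i ∈ Finset.Icc 1 (n + m), KMd a b i :=
  generalized_binomial_D_integral_general a b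
end

section
/- Let F be a field, let A be a (not necessarily commutative) associative unital F-algebra that is finitely generated as an F-algebra, and let B be an F-subalgebra of A. Suppose that A, regarded as a left B-module via left multiplication, is free with a finite basis c_1, …, c_m such that c_1 = 1. Then B is finitely generated as an F-algebra. -/
/-!
Let `x₁, …, xₙ` generate `A` over `F`, write `cᵢ xₖ = ∑ⱼ tᵢₖⱼ cⱼ` with `tᵢₖⱼ ∈ B`, and let
`B₀ ⊆ B` be the subalgebra generated by the finitely many `tᵢₖⱼ`. The left `B₀`-span of the `cⱼ`
contains `c₀ = 1` and is stable under right multiplication by the `xₖ`, so it is all of `A`.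
Given `b ∈ B`, uniqueness of `B`-coordinates compares a `B₀`-expansion of `b` with `b = b c₀`
and shows `b ∈ B₀`. Hence `B = B₀` is finitely generated.
-/

open Algebra Submodule

section

variable {R A : Type*} [CommSemiring R] [Semiring A] [Algebra R A] {B : Subalgebra R A}

theorem Submodule.mul_mem_of_mem_adjoin {s : Set A} (N : Submodule B A)
    (hs : ∀ x ∈ s, ∀ a ∈ N, a * x ∈ N) {x : A} (hx : x ∈ adjoin R s) :
    ∀ a ∈ N, a * x ∈ N := by
  induction hx using Algebra.adjoin_induction with
  | mem x hx => exact hs x hx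
  | algebraMap r =>
    intro a ha
    rw [← Algebra.commutes, ← Algebra.smul_def]
    exact N.smul_of_tower_mem r ha
  | add x y _ _ hx hy => exact fun a ha => mul_add a x y ▸ N.add_mem (hx a ha) (hy a ha)
  | mul x y _ _ hx hy => exact fun a ha => mul_assoc a x y ▸ hy _ (hx a ha)

theorem Submodule.span_range_eq_top_of_mul_mem {ι : Type*} {s : Set A} (hs : adjoin R s = ⊤)
    {c : ι → A} (hone : 1 ∈ span B (Set.range c))
    (hmul : ∀ i, ∀ x ∈ s, c i * x ∈ span B (Set.range c)) :
    span B (Set.range c) = ⊤ := by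
  have hright : ∀ x ∈ s, ∀ a ∈ span B (Set.range c), a * x ∈ span B (Set.range c) := by
    intro x hx a ha
    induction ha using Submodule.span_induction with
    | mem a ha => obtain ⟨i, rfl⟩ := ha; exact hmul i x hx
    | zero => simp
    | add a b _ _ ha hb => exact add_mul a b x ▸ add_mem ha hb
    | smul b a _ ha => rw [smul_mul_assoc]; exact smul_mem _ b ha
  refine eq_top_iff'.2 fun x => ?_
  simpa using (span B (Set.range c)).mul_mem_of_mem_adjoin hright (hs ▸ Algebra.mem_top) 1 hone

theorem apply_eq_self_of_unique_repr {ι : Type*} [Fintype ι] {c : ι → A} {i₀ : ι}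
    (hc : c i₀ = 1) (hunique : ∀ x : A, ∃! f : ι → B, x = ∑ i, (f i : A) * c i)
    {f : ι → B} (b : B) (hf : (b : A) = ∑ i, (f i : A) * c i) : f i₀ = b := by
  classical
  have hb : (b : A) = ∑ i, ((Pi.single i₀ b : ι → B) i : A) * c i := by
    rw [Finset.sum_eq_single i₀ (fun i _ hi => by simp [hi]) (by simp)]
    simp [hc]
  exact (congrFun ((hunique b).unique hf hb) i₀).trans (by simp)

end

theorem finiteType_of_free_basis
    (F : Type*) [Field F] (A : Type*) [Ring A] [Algebra F A]
    (hA : Algebra.FiniteType F A) (B : Subalgebra F A)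
    (m : ℕ) (c : Fin (m + 1) → A) (hc0 : c 0 = 1)
    (hbasis : ∀ x : A, ∃! f : Fin (m + 1) → B, x = ∑ i, (f i : A) * c i) :
    Algebra.FiniteType F B := by
  obtain ⟨s, hs⟩ := hA.out
  choose coord hcoord using fun a => (hbasis a).exists
  let T : Set A := Set.range fun p : Fin (m + 1) × s × Fin (m + 1) =>
    (coord (c p.1 * p.2.1) p.2.2 : A)
  let B₀ : Subalgebra F A := adjoin F T
  have hB₀B : B₀ ≤ B := adjoin_le (by rintro _ ⟨p, rfl⟩; exact (coord _ _).2)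
  have hspan : span B₀ (Set.range c) = ⊤ := by
    refine span_range_eq_top_of_mul_mem hs (subset_span ⟨0, hc0⟩) fun i x hx => ?_
    rw [hcoord (c i * x)]
    refine sum_mem fun j _ => ?_
    have hcoeff : (coord (c i * x) j : A) ∈ B₀ :=
      subset_adjoin (Set.mem_range_self (i, (⟨x, hx⟩ : s), j))
    exact smul_mem _ (⟨_, hcoeff⟩ : B₀) (subset_span (Set.mem_range_self j))
  have hBB₀ : B ≤ B₀ := by
    intro b hb
    obtain ⟨f, hf⟩ := (mem_span_range_iff_exists_fun _).1 (hspan ▸ Submodule.mem_top (x := b))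
    have hf0 := apply_eq_self_of_unique_repr hc0 hbasis
      (f := fun i => Subalgebra.inclusion hB₀B (f i)) ⟨b, hb⟩ hf.symm
    have hb0 : (f 0 : A) = b := congrArg Subtype.val hf0
    exact hb0 ▸ (f 0).2
  rw [← Subalgebra.fg_iff_finiteType, le_antisymm hBB₀ hB₀B]
  exact Subalgebra.fg_def.2 ⟨T, Set.finite_range _, rfl⟩
end

section
/- Let a, b be integers with a ≥ 1, b ≥ 1 and a*b ≥ 4, and let c, d be the associated recursive sequences. In the ring of formal power series ℤ⟦X⟧, the generating functions C(X) = Σ_{i≥0} c_i X^i and D(X) = Σ_{i≥0} d_i X^i satisfy the functional equations (1 + X²)·C(X) = X + a·X·D(X) and (1 + X²)·D(X) = X + b·X·C(X). -/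
open PowerSeries in
theorem PowerSeries.one_add_X_sq_mul_mk_of_recurrence {R : Type*} [CommRing R] (a : R)
    {f g : ℕ → R} (hf0 : f 0 = 0) (hf1 : f 1 = 1) (hg0 : g 0 = 0)
    (hrec : ∀ n, f (n + 2) = a * g (n + 1) - f n) :
    (1 + X ^ 2) * mk f = X + C a * (X * mk g) := by
  ext (_ | _ | n)
  · simp [hf0]
  · simp [add_mul, coeff_X_pow_mul', hf1, hg0]
  · simp [add_mul, coeff_X_pow_mul', coeff_X, hrec]

theorem generating_function_functional_equations_general
    (a b : ℤ) :
    (1 + PowerSeries.X ^ 2) * PowerSeries.mk (fun i => KMc a b i)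
        = PowerSeries.X
          + PowerSeries.C (R := ℤ) a * (PowerSeries.X * PowerSeries.mk (fun i => KMd a b i)) ∧
    (1 + PowerSeries.X ^ 2) * PowerSeries.mk (fun i => KMd a b i)
        = PowerSeries.X
          + PowerSeries.C (R := ℤ) b * (PowerSeries.X * PowerSeries.mk (fun i => KMc a b i)) :=
  ⟨PowerSeries.one_add_X_sq_mul_mk_of_recurrence a rfl rfl rfl fun _ => rfl,
    PowerSeries.one_add_X_sq_mul_mk_of_recurrence b rfl rfl rfl fun _ => rfl⟩

theorem generating_function_functional_equations
    (a b : ℤ) (ha : 1 ≤ a) (hb : 1 ≤ b) (hab : 4 ≤ a * b) :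
    (1 + PowerSeries.X ^ 2) * PowerSeries.mk (fun i => KMc a b i)
        = PowerSeries.X
          + PowerSeries.C (R := ℤ) a * (PowerSeries.X * PowerSeries.mk (fun i => KMd a b i)) ∧
    (1 + PowerSeries.X ^ 2) * PowerSeries.mk (fun i => KMd a b i)
        = PowerSeries.X
          + PowerSeries.C (R := ℤ) b * (PowerSeries.X * PowerSeries.mk (fun i => KMc a b i)) :=
  generating_function_functional_equations_general a b
end

section
/- Let a, b be integers with a ≥ 1, b ≥ 1 and a*b ≥ 4, let c, d be the associated recursive sequences, and let p be an odd prime with a*b ≢ 4 (mod p). Let F = GaloisField p 2 be the field with p² elements, choose μ ∈ F with μ² = (a*b − 4 : F) (such μ exists), and set M = (2 : F)⁻¹ • !![μ, (a:F); (b:F), μ], a 2×2 matrix over F. Then M is invertible, M − M⁻¹ is invertible, and for every natural number n the vector ((c n : F), (d n : F)) equals ((M − M⁻¹)⁻¹ * (M^n − (M⁻¹)^n)) applied to the vector (1, 1). -/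
/-!
With `A = !![0, a; b, 0]` we have `A ^ 2 = a * b`, so for `μ ^ 2 = a * b - 4` the matrices
`M = (μ + A) / 2` and `K = (-μ + A) / 2` play the roles of the two roots of `t + t⁻¹ = A`:
`M * K = 1`, `M + K = A` and `M - K = μ`. Hence `Mⁿ - Kⁿ` satisfies the same two-step recursion
`X (n + 2) = A * X (n + 1) - X n` as the vectors `(c n, d n)`, and comparing initial values gives
`(Mⁿ - Kⁿ) (1, 1) = μ • (c n, d n)`. The root `μ` exists because every `x ∈ 𝔽_p` is a square in
`𝔽_{p²}`: by Euler's criterion, `x ^ ((p ^ 2 - 1) / 2) = (x ^ (p - 1)) ^ ((p + 1) / 2) = 1`.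
-/

open Matrix

section Sequences

variable (R : Type*) [CommRing R] (a b : ℤ)

def KMcdVec (n : ℕ) : Fin 2 → R := ![(KMc a b n : R), (KMd a b n : R)]

lemma KMcdVec_zero : KMcdVec R a b 0 = 0 := by
  ext i; fin_cases i <;> simp [KMcdVec, KMc, KMd, KMcd]

lemma KMcdVec_one : KMcdVec R a b 1 = ![1, 1] := by
  simp [KMcdVec, KMc, KMd, KMcd]

lemma KMcdVec_add_two (n : ℕ) :
    KMcdVec R a b (n + 2) =
      !![0, (a : R); (b : R), 0] *ᵥ KMcdVec R a b (n + 1) - KMcdVec R a b n := by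
  ext i; fin_cases i <;> simp [KMcdVec, KMc, KMd, KMcd, mul_comm]

end Sequences

lemma pow_add_two_sub_pow_add_two {R : Type*} [Ring R] {x y : R} (hxy : x * y = 1)
    (hyx : y * x = 1) (n : ℕ) :
    x ^ (n + 2) - y ^ (n + 2) = (x + y) * (x ^ (n + 1) - y ^ (n + 1)) - (x ^ n - y ^ n) := by
  have hx : x * y ^ (n + 1) = y ^ n := by rw [pow_succ', ← mul_assoc, hxy, one_mul]
  have hy : y * x ^ (n + 1) = x ^ n := by rw [pow_succ', ← mul_assoc, hyx, one_mul]
  rw [add_mul, mul_sub, mul_sub, ← pow_succ', ← pow_succ', hx, hy]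
  abel

lemma pow_sub_pow_mulVec_eq_smul_KMcdVec {R : Type*} [CommRing R] {a b : ℤ} {μ : R}
    {M K : Matrix (Fin 2) (Fin 2) R} (hMK : M * K = 1)
    (hadd : M + K = !![0, (a : R); (b : R), 0]) (hsub : M - K = μ • 1) (n : ℕ) :
    (M ^ n - K ^ n) *ᵥ ![1, 1] = μ • KMcdVec R a b n := by
  induction n using Nat.twoStepInduction with
  | zero => simp [KMcdVec_zero]
  | one => simp [hsub, KMcdVec_one]
  | more n ih ih₁ =>
    rw [pow_add_two_sub_pow_add_two hMK (mul_eq_one_comm.mp hMK), sub_mulVec, ← mulVec_mulVec,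
      ih, ih₁, hadd, KMcdVec_add_two, mulVec_smul, smul_sub]

section HalfMatrix

variable {F : Type*} [Field F]

def halfMatrix (μ α β : F) : Matrix (Fin 2) (Fin 2) F := (2 : F)⁻¹ • !![μ, α; β, μ]

variable {μ : F} (α β : F)

lemma halfMatrix_mul_halfMatrix_neg (h2 : (2 : F) ≠ 0) (hμ : μ ^ 2 = α * β - 4) :
    halfMatrix μ α β * halfMatrix (-μ) α β = 1 := by
  ext i j
  fin_cases i <;> fin_cases j <;> simp [halfMatrix, mul_apply] <;> field_simp
  · linear_combination -hμ
  · ring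
  · ring
  · linear_combination -hμ

lemma halfMatrix_add_halfMatrix_neg (h2 : (2 : F) ≠ 0) :
    halfMatrix μ α β + halfMatrix (-μ) α β = !![0, α; β, 0] := by
  ext i j; fin_cases i <;> fin_cases j <;> simp [halfMatrix] <;> field_simp <;> ring

lemma halfMatrix_sub_halfMatrix_neg (h2 : (2 : F) ≠ 0) :
    halfMatrix μ α β - halfMatrix (-μ) α β = μ • 1 := by
  ext i j; fin_cases i <;> fin_cases j <;> simp [halfMatrix] <;> field_simp <;> ring

end HalfMatrix

lemma isSquare_algebraMap_galoisField_two (p : ℕ) [Fact p.Prime] (x : ZMod p) :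
    IsSquare (algebraMap (ZMod p) (GaloisField p 2) x) := by
  have := Fintype.ofFinite (GaloisField p 2)
  by_cases hchar : ringChar (GaloisField p 2) = 2
  · exact FiniteField.isSquare_of_char_two hchar _
  rcases eq_or_ne x 0 with rfl | hx
  · simp
  obtain ⟨k, hk⟩ : ∃ k, Fintype.card (GaloisField p 2) / 2 = (p - 1) * k := by
    have hodd : Odd p :=
      (Fact.out : p.Prime).odd_of_ne_two (by rwa [← ringChar.eq (GaloisField p 2) p])
    rw [← Nat.card_eq_fintype_card, GaloisField.card p 2 two_ne_zero]
    obtain ⟨m, rfl⟩ := hodd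
    refine ⟨m + 1, ?_⟩
    rw [show (2 * m + 1) ^ 2 = 2 * (2 * m * (m + 1)) + 1 by ring, Nat.mul_add_div two_pos]
    simp [mul_assoc]
  rw [FiniteField.isSquare_iff hchar ((map_ne_zero _).mpr hx), hk, pow_mul, ← map_pow,
    ZMod.pow_card_sub_one_eq_one hx, map_one, one_pow]

theorem matrix_formula_galoisField_general
    (a b : ℤ)
    (p : ℕ) [Fact p.Prime] (hodd : Odd p)
    (hmod : ¬ a * b ≡ 4 [ZMOD (p : ℤ)]) :
    (∃ μ : GaloisField p 2, μ ^ 2 = ((a * b - 4 : ℤ) : GaloisField p 2)) ∧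
    ∀ μ : GaloisField p 2, μ ^ 2 = ((a * b - 4 : ℤ) : GaloisField p 2) →
      let M : Matrix (Fin 2) (Fin 2) (GaloisField p 2) :=
        (2 : GaloisField p 2)⁻¹ •
          !![μ, ((a : ℤ) : GaloisField p 2); ((b : ℤ) : GaloisField p 2), μ]
      IsUnit M ∧ IsUnit (M - M⁻¹) ∧
      ∀ n : ℕ,
        ![((KMc a b n : ℤ) : GaloisField p 2), ((KMd a b n : ℤ) : GaloisField p 2)]
          = ((M - M⁻¹)⁻¹ * (M ^ n - (M⁻¹) ^ n)).mulVec ![1, 1] := by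
  refine ⟨?_, fun μ hμ => ?_⟩
  · obtain ⟨r, hr⟩ := isSquare_algebraMap_galoisField_two p ((a * b - 4 : ℤ) : ZMod p)
    exact ⟨r, by rw [sq, ← hr, map_intCast]⟩
  intro M
  have h2 : (2 : GaloisField p 2) ≠ 0 := Ring.two_ne_zero <| by
    rw [ringChar.eq (GaloisField p 2) p]; rintro rfl; exact Nat.not_even_iff_odd.mpr hodd even_two
  have hμ0 : μ ≠ 0 := by
    rintro rfl
    refine hmod (Int.modEq_of_dvd ?_).symm
    rw [← CharP.intCast_eq_zero_iff (GaloisField p 2) p, ← hμ, zero_pow two_ne_zero]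
  have hμ' : μ ^ 2 = (a : GaloisField p 2) * b - 4 := by rw [hμ]; push_cast; ring
  have hMK : M * halfMatrix (-μ) a b = 1 := halfMatrix_mul_halfMatrix_neg _ _ h2 hμ'
  have hinv : M⁻¹ = halfMatrix (-μ) a b := inv_eq_right_inv hMK
  have hsub : M - M⁻¹ = μ • 1 := hinv ▸ halfMatrix_sub_halfMatrix_neg _ _ h2
  have hsub_inv : (M - M⁻¹)⁻¹ = μ⁻¹ • 1 := inv_eq_right_inv (by simp [hsub, hμ0])
  refine ⟨(isUnit_iff_isUnit_det M).mpr (isUnit_det_of_right_inverse hMK),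
    by simp [isUnit_iff_isUnit_det, hsub, hμ0], fun n => ?_⟩
  rw [hsub_inv, ← mulVec_mulVec, hinv, pow_sub_pow_mulVec_eq_smul_KMcdVec hMK
    (halfMatrix_add_halfMatrix_neg _ _ h2) (halfMatrix_sub_halfMatrix_neg _ _ h2),
    smul_mulVec, one_mulVec, smul_smul, inv_mul_cancel₀ hμ0, one_smul]
  rfl

theorem matrix_formula_galoisField
    (a b : ℤ) (ha : 1 ≤ a) (hb : 1 ≤ b) (hab : 4 ≤ a * b)
    (p : ℕ) [Fact p.Prime] (hodd : Odd p)
    (hmod : ¬ a * b ≡ 4 [ZMOD (p : ℤ)]) :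
    (∃ μ : GaloisField p 2, μ ^ 2 = ((a * b - 4 : ℤ) : GaloisField p 2)) ∧
    ∀ μ : GaloisField p 2, μ ^ 2 = ((a * b - 4 : ℤ) : GaloisField p 2) →
      let M : Matrix (Fin 2) (Fin 2) (GaloisField p 2) :=
        (2 : GaloisField p 2)⁻¹ •
          !![μ, ((a : ℤ) : GaloisField p 2); ((b : ℤ) : GaloisField p 2), μ]
      IsUnit M ∧ IsUnit (M - M⁻¹) ∧
      ∀ n : ℕ,
        ![((KMc a b n : ℤ) : GaloisField p 2), ((KMd a b n : ℤ) : GaloisField p 2)]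
          = ((M - M⁻¹)⁻¹ * (M ^ n - (M⁻¹) ^ n)).mulVec ![1, 1] :=
  matrix_formula_galoisField_general a b p hodd hmod
end
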